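/- arXiv:2002.08108 — 7 statements merged into one kernel-verified Lean document; each statement's English description precedes it below -/
import Mathlib

section
/- Every polymatroid arising from a collection of vector subspaces satisfies the Ingleton inequality: for all subsets A1, A2, A3, A4 of the ground set, f(A2:A3) ≤ f(A2:A3|A1) + f(A2:A3|A4) + f(A1:A4), where f(Y:Z|X) = f(X∪Y)+f(X∪Z)-f(X∪Y∪Z)-f(X) and f(Y:Z)=f(Y:Z|∅). -/
/-!
For subspaces the conditional mutual information is a dimension:
`f(B₂:B₃|B₁) = dim((B₁+B₂) ∩ (B₁+B₃)) - dim B₁`. Since `B₁ + (B₂ ∩ B₃)` lies in that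
intersection, `f(B₂:B₃|B₁) ≥ dim T - dim(B₁ ∩ T)` with `T = B₂ ∩ B₃`, and likewise for `B₄`.
Together with `f(B₁:B₄) = dim(B₁ ∩ B₄) ≥ dim(B₁ ∩ B₄ ∩ T)`, the modular law applied to
`B₁ ∩ T` and `B₄ ∩ T` inside `T` bounds the right-hand side below by `dim T = f(B₂:B₃)`.
-/

open Module Submodule

namespace Submodule

variable {F W : Type*} [Field F] [AddCommGroup W] [Module F W] [FiniteDimensional F W]

theorem finrank_sup_add_finrank_sup (A B C : Submodule F W) :
    finrank F ↥(A ⊔ B) + finrank F ↥(A ⊔ C) =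
      finrank F ↥(A ⊔ B ⊔ C) + finrank F ↥((A ⊔ B) ⊓ (A ⊔ C)) := by
  rw [← finrank_sup_add_finrank_inf_eq, sup_sup_sup_comm, sup_idem, sup_assoc]

theorem finrank_inf_add_finrank_le (A B C : Submodule F W) :
    finrank F ↥(B ⊓ C) + finrank F A ≤
      finrank F ↥((A ⊔ B) ⊓ (A ⊔ C)) + finrank F ↥(A ⊓ (B ⊓ C)) := by
  have hle : A ⊔ B ⊓ C ≤ (A ⊔ B) ⊓ (A ⊔ C) :=
    le_inf (sup_le_sup_left inf_le_left _) (sup_le_sup_left inf_le_right _)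
  have := finrank_sup_add_finrank_inf_eq A (B ⊓ C)
  have := finrank_mono hle
  omega

theorem finrank_inf_add_finrank_inf_le (A B T : Submodule F W) :
    finrank F ↥(A ⊓ T) + finrank F ↥(B ⊓ T) ≤ finrank F T + finrank F ↥(A ⊓ B) := by
  rw [← finrank_sup_add_finrank_inf_eq]
  exact add_le_add (finrank_mono (sup_le inf_le_right inf_le_right))
    (finrank_mono (inf_le_inf inf_le_left inf_le_left))

theorem ingleton_finrank (B₁ B₂ B₃ B₄ : Submodule F W) :
    finrank F ↥(B₂ ⊓ B₃) + finrank F B₁ + finrank F B₄ ≤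
      finrank F ↥((B₁ ⊔ B₂) ⊓ (B₁ ⊔ B₃)) + finrank F ↥((B₄ ⊔ B₂) ⊓ (B₄ ⊔ B₃)) +
        finrank F ↥(B₁ ⊓ B₄) := by
  have h₁ := finrank_inf_add_finrank_le B₁ B₂ B₃
  have h₄ := finrank_inf_add_finrank_le B₄ B₂ B₃
  have h₁₄ := finrank_inf_add_finrank_inf_le B₁ B₄ (B₂ ⊓ B₃)
  omega

end Submodule

theorem linear_polymatroid_ingleton_general
    {α F W : Type*} [DecidableEq α]
    [Field F] [AddCommGroup W] [Module F W] [FiniteDimensional F W]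
    (V : α → Submodule F W)
    (f : Finset α → ℝ)
    (hf : ∀ X : Finset α, f X = (Module.finrank F ↥(⨆ x ∈ X, V x) : ℝ))
    (A1 A2 A3 A4 : Finset α) :
    f A2 + f A3 - f (A2 ∪ A3) ≤
      (f (A1 ∪ A2) + f (A1 ∪ A3) - f (A1 ∪ A2 ∪ A3) - f A1) +
      (f (A4 ∪ A2) + f (A4 ∪ A3) - f (A4 ∪ A2 ∪ A3) - f A4) +
      (f A1 + f A4 - f (A1 ∪ A4)) := by
  obtain ⟨B, hB, hunion⟩ : ∃ B : Finset α → Submodule F W,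
      (∀ X, f X = finrank F (B X)) ∧ ∀ X Y, B (X ∪ Y) = B X ⊔ B Y :=
    ⟨_, hf, fun _ _ => Finset.iSup_union⟩
  simp only [hB]
  repeat rw [hunion]
  have h₂₃ := finrank_sup_add_finrank_inf_eq (B A2) (B A3)
  have h₁₄ := finrank_sup_add_finrank_inf_eq (B A1) (B A4)
  have h₁ := finrank_sup_add_finrank_sup (B A1) (B A2) (B A3)
  have h₄ := finrank_sup_add_finrank_sup (B A4) (B A2) (B A3)
  have key := ingleton_finrank (B A1) (B A2) (B A3) (B A4)
  rify at h₂₃ h₁₄ h₁ h₄ key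
  linarith

/-- Every linear polymatroid (arising from a collection of vector subspaces)
satisfies the Ingleton inequality
`f(A2:A3) ≤ f(A2:A3|A1) + f(A2:A3|A4) + f(A1:A4)`. -/
theorem linear_polymatroid_ingleton
    {α F W : Type*} [Fintype α] [DecidableEq α]
    [Field F] [AddCommGroup W] [Module F W] [FiniteDimensional F W]
    (V : α → Submodule F W)
    (f : Finset α → ℝ)
    (hf : ∀ X : Finset α, f X = (Module.finrank F ↥(⨆ x ∈ X, V x) : ℝ))
    (A1 A2 A3 A4 : Finset α) :
    f A2 + f A3 - f (A2 ∪ A3) ≤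
      (f (A1 ∪ A2) + f (A1 ∪ A3) - f (A1 ∪ A2 ∪ A3) - f A1) +
      (f (A4 ∪ A2) + f (A4 ∪ A3) - f (A4 ∪ A2 ∪ A3) - f A4) +
      (f A1 + f A4 - f (A1 ∪ A4)) :=
  linear_polymatroid_ingleton_general V f hf A1 A2 A3 A4
end

section
/- Let (Q,f) be a linear polymatroid given by subspaces (V_x)_{x∈Q} of a finite-dimensional vector space V over a field F, and let A, B ⊆ Q. Extending the collection by the subspace V_{x_o} = V_A ∩ V_B gives a linear polymatroid (Q∪{x_o}, f) extending (Q,f) in which x_o is a common information for the pair (A,B), i.e., f(x_o|A) = f(x_o|B) = 0 and f(x_o) = f(A:B). -/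
theorem Submodule.cast_finrank_inf {R K V : Type*} [AddCommGroupWithOne R] [Field K]
    [AddCommGroup V] [Module K V] (s t : Submodule K V) [FiniteDimensional K s]
    [FiniteDimensional K t] :
    (Module.finrank K ↥(s ⊓ t) : R) =
      Module.finrank K s + Module.finrank K t - Module.finrank K ↥(s ⊔ t) := by
  rw [← Nat.cast_add, ← Submodule.finrank_sup_add_finrank_inf_eq s t, Nat.cast_add,
    add_sub_cancel_left]

/-- The extended ground set `Q ∪ {x_o}` is modelled by `Option α`, with `x_o = none`. -/
theorem linear_common_information_general
    {α F W : Type*} [DecidableEq α]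
    [Field F] [AddCommGroup W] [Module F W] [FiniteDimensional F W]
    (V : α → Submodule F W) (A B : Finset α)
    (f : Finset α → ℝ)
    (hf : ∀ X : Finset α, f X = (Module.finrank F ↥(⨆ x ∈ X, V x) : ℝ))
    (V' : Option α → Submodule F W)
    (hV'some : ∀ x : α, V' (some x) = V x)
    (hV'none : V' none = (⨆ x ∈ A, V x) ⊓ (⨆ x ∈ B, V x))
    (f' : Finset (Option α) → ℝ)
    (hf' : ∀ X : Finset (Option α), f' X = (Module.finrank F ↥(⨆ o ∈ X, V' o) : ℝ)) :
    (∀ X : Finset α, f' (X.image some) = f X) ∧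
    f' (insert none (A.image some)) - f' (A.image some) = 0 ∧
    f' (insert none (B.image some)) - f' (B.image some) = 0 ∧
    f' {none} = f A + f B - f (A ∪ B) := by
  have iSup_image_some (X : Finset α) : ⨆ o ∈ X.image some, V' o = ⨆ x ∈ X, V x := by
    simp only [Finset.iSup_finset_image, hV'some]
  have cond_none_eq_zero_of_le (X : Finset α) (hX : V' none ≤ ⨆ x ∈ X, V x) :
      f' (insert none (X.image some)) - f' (X.image some) = 0 := by
    rw [hf', hf', Finset.iSup_insert, iSup_image_some, sup_eq_right.mpr hX, sub_self]
  refine ⟨fun X => by rw [hf', hf, iSup_image_some],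
    cond_none_eq_zero_of_le A (hV'none ▸ inf_le_left),
    cond_none_eq_zero_of_le B (hV'none ▸ inf_le_right), ?_⟩
  rw [hf', hf, hf, hf, Finset.iSup_singleton, hV'none, Finset.iSup_union,
    Submodule.cast_finrank_inf]

/-- Extending a linear polymatroid, given by subspaces `(V_x)_{x∈Q}`, by the
subspace `V_{x_o} = V_A ⊓ V_B` gives a linear polymatroid extending `(Q,f)` in
which `x_o` is a common information for the pair `(A,B)`:
`f(x_o|A) = f(x_o|B) = 0` and `f(x_o) = f(A:B)`. Here the extended ground set
`Q ∪ {x_o}` is modelled by `Option α`, with `x_o = none`. -/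
theorem linear_common_information
    {α F W : Type*} [Fintype α] [DecidableEq α]
    [Field F] [AddCommGroup W] [Module F W] [FiniteDimensional F W]
    (V : α → Submodule F W) (A B : Finset α)
    (f : Finset α → ℝ)
    (hf : ∀ X : Finset α, f X = (Module.finrank F ↥(⨆ x ∈ X, V x) : ℝ))
    (V' : Option α → Submodule F W)
    (hV'some : ∀ x : α, V' (some x) = V x)
    (hV'none : V' none = (⨆ x ∈ A, V x) ⊓ (⨆ x ∈ B, V x))
    (f' : Finset (Option α) → ℝ)
    (hf' : ∀ X : Finset (Option α), f' X = (Module.finrank F ↥(⨆ o ∈ X, V' o) : ℝ)) :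
    (∀ X : Finset α, f' (X.image some) = f X) ∧
    f' (insert none (A.image some)) - f' (A.image some) = 0 ∧
    f' (insert none (B.image some)) - f' (B.image some) = 0 ∧
    f' {none} = f A + f B - f (A ∪ B) :=
  linear_common_information_general V A B f hf V' hV'some hV'none f' hf'
end

section
/- Let (Q',f) be a polymatroid extending (Q,f), and let U, V, Z ⊆ Q. If x_o ∈ Q' is a common information for the pair (U∪V, Z), i.e., f(x_o|U∪V) = f(x_o|Z) = 0 and f(x_o) = f(U∪V : Z), then x_o is an AK-information for the triple (U,V,Z): f(x_o|U∪V) = 0, f(U|x_o) = f(U|Z), f(V|x_o) = f(V|Z), and f(U∪V|x_o) = f(U∪V|Z). -/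
/-!
Since `f(x_o | Z) = 0`, conditioning on `Z` is at least as informative as conditioning on `x_o`:
for `A ⊆ B`, `f(B | Z ∪ A) ≤ f(B | x_o ∪ A)`. Along the chains `∅ ⊆ U ⊆ U ∪ V` and
`∅ ⊆ V ⊆ U ∪ V` these gaps are nonnegative and add up to `f(U ∪ V | x_o) - f(U ∪ V | Z)`,
which (C1) and (C2) force to be `0`; hence every gap vanishes.
-/

namespace Polymatroid

variable {α : Type*} [DecidableEq α] {f : Finset α → ℝ}

theorem union_sub_le_union_sub_of_subset (hmono : ∀ X Y : Finset α, X ⊆ Y → f X ≤ f Y)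
    (hsubmod : ∀ X Y : Finset α, f (X ∩ Y) + f (X ∪ Y) ≤ f X + f Y)
    {X Y : Finset α} (hXY : X ⊆ Y) (B : Finset α) :
    f (B ∪ Y) - f Y ≤ f (B ∪ X) - f X := by
  have hinter : f X ≤ f ((B ∪ X) ∩ Y) :=
    hmono _ _ (Finset.subset_inter Finset.subset_union_right hXY)
  have hunion : (B ∪ X) ∪ Y = B ∪ Y := by
    rw [Finset.union_assoc, Finset.union_eq_right.mpr hXY]
  have := hsubmod (B ∪ X) Y
  rw [hunion] at this
  linarith

theorem insert_eq_of_insert_eq_of_subset (hmono : ∀ X Y : Finset α, X ⊆ Y → f X ≤ f Y)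
    (hsubmod : ∀ X Y : Finset α, f (X ∩ Y) + f (X ∪ Y) ≤ f X + f Y)
    {x : α} {Z W : Finset α} (hx : f (insert x Z) = f Z) (hZW : Z ⊆ W) :
    f (insert x W) = f W := by
  have := union_sub_le_union_sub_of_subset hmono hsubmod hZW {x}
  rw [← Finset.insert_eq, ← Finset.insert_eq] at this
  linarith [hmono _ _ (Finset.subset_insert x W)]

theorem sub_le_sub_insert_of_insert_eq (hmono : ∀ X Y : Finset α, X ⊆ Y → f X ≤ f Y)
    (hsubmod : ∀ X Y : Finset α, f (X ∩ Y) + f (X ∪ Y) ≤ f X + f Y)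
    {x : α} {Z : Finset α} (hx : f (insert x Z) = f Z) {A B : Finset α} (hAB : A ⊆ B) :
    f (Z ∪ B) - f (Z ∪ A) ≤ f (insert x B) - f (insert x A) := by
  have hZA : f (insert x (Z ∪ A)) = f (Z ∪ A) :=
    insert_eq_of_insert_eq_of_subset hmono hsubmod hx Finset.subset_union_left
  have hsub : insert x A ⊆ insert x (Z ∪ A) :=
    Finset.insert_subset_insert x Finset.subset_union_right
  have := union_sub_le_union_sub_of_subset hmono hsubmod hsub B
  rw [Finset.union_insert, Finset.union_insert, Finset.union_left_comm,
    Finset.union_eq_left.mpr hAB] at this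
  linarith [hmono _ _ (Finset.subset_insert x (Z ∪ B))]

theorem sub_le_sub_singleton_of_insert_eq (hmono : ∀ X Y : Finset α, X ⊆ Y → f X ≤ f Y)
    (hsubmod : ∀ X Y : Finset α, f (X ∩ Y) + f (X ∪ Y) ≤ f X + f Y)
    {x : α} {Z : Finset α} (hx : f (insert x Z) = f Z) (B : Finset α) :
    f (Z ∪ B) - f Z ≤ f (insert x B) - f {x} := by
  simpa using sub_le_sub_insert_of_insert_eq hmono hsubmod hx (Finset.empty_subset B)

end Polymatroid

open Polymatroid in
theorem common_information_is_AK_information_general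
    {α : Type*} [DecidableEq α]
    (f : Finset α → ℝ)
    (hmono : ∀ X Y : Finset α, X ⊆ Y → f X ≤ f Y)
    (hsubmod : ∀ X Y : Finset α, f (X ∩ Y) + f (X ∪ Y) ≤ f X + f Y)
    (U V Z : Finset α) (xo : α)
    -- (C1): f(x_o | U∪V) = 0 and f(x_o | Z) = 0
    (hC1a : f (insert xo (U ∪ V)) - f (U ∪ V) = 0)
    (hC1b : f (insert xo Z) - f Z = 0)
    -- (C2): f(x_o) = f(U∪V : Z)
    (hC2 : f {xo} = f (U ∪ V) + f Z - f (U ∪ V ∪ Z)) :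
    -- (AK1): f(x_o | U∪V) = 0
    f (insert xo (U ∪ V)) - f (U ∪ V) = 0 ∧
    -- (AK2): f(U | x_o) = f(U | Z) and f(V | x_o) = f(V | Z)
    f (insert xo U) - f {xo} = f (Z ∪ U) - f Z ∧
    f (insert xo V) - f {xo} = f (Z ∪ V) - f Z ∧
    -- (AK3): f(U∪V | x_o) = f(U∪V | Z)
    f (insert xo (U ∪ V)) - f {xo} = f (Z ∪ (U ∪ V)) - f Z := by
  have hx : f (insert xo Z) = f Z := sub_eq_zero.mp hC1b
  have hUV : f (insert xo (U ∪ V)) - f {xo} = f (Z ∪ (U ∪ V)) - f Z := by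
    rw [Finset.union_comm Z]
    linarith
  have hU := sub_le_sub_singleton_of_insert_eq hmono hsubmod hx U
  have hV := sub_le_sub_singleton_of_insert_eq hmono hsubmod hx V
  have hUUV := sub_le_sub_insert_of_insert_eq hmono hsubmod hx
    (Finset.subset_union_left : U ⊆ U ∪ V)
  have hVUV := sub_le_sub_insert_of_insert_eq hmono hsubmod hx
    (Finset.subset_union_right : V ⊆ U ∪ V)
  exact ⟨hC1a, by linarith, by linarith, hUV⟩

/-- If `x_o` is a common information for the pair `(U∪V, Z)` in a polymatroid,
then `x_o` is an AK-information for the triple `(U,V,Z)`. -/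
theorem common_information_is_AK_information
    {α : Type*} [DecidableEq α] [Fintype α]
    (f : Finset α → ℝ)
    (hempty : f ∅ = 0)
    (hmono : ∀ X Y : Finset α, X ⊆ Y → f X ≤ f Y)
    (hsubmod : ∀ X Y : Finset α, f (X ∩ Y) + f (X ∪ Y) ≤ f X + f Y)
    (U V Z : Finset α) (xo : α)
    -- (C1): f(x_o | U∪V) = 0 and f(x_o | Z) = 0
    (hC1a : f (insert xo (U ∪ V)) - f (U ∪ V) = 0)
    (hC1b : f (insert xo Z) - f Z = 0)
    -- (C2): f(x_o) = f(U∪V : Z)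
    (hC2 : f {xo} = f (U ∪ V) + f Z - f (U ∪ V ∪ Z)) :
    -- (AK1): f(x_o | U∪V) = 0
    f (insert xo (U ∪ V)) - f (U ∪ V) = 0 ∧
    -- (AK2): f(U | x_o) = f(U | Z) and f(V | x_o) = f(V | Z)
    f (insert xo U) - f {xo} = f (Z ∪ U) - f Z ∧
    f (insert xo V) - f {xo} = f (Z ∪ V) - f Z ∧
    -- (AK3): f(U∪V | x_o) = f(U∪V | Z)
    f (insert xo (U ∪ V)) - f {xo} = f (Z ∪ (U ∪ V)) - f Z :=
  common_information_is_AK_information_general f hmono hsubmod U V Z xo hC1a hC1b hC2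
end

section
/- If a polymatroid (Q,f) is 1-CI-compliant (for every pair (A,B) of subsets of Q there is an extension (Q∪{x_o},f) in which x_o is a common information for (A,B)), then f satisfies the Ingleton inequality: for all A1,A2,A3,A4 ⊆ Q, f(A2:A3) ≤ f(A2:A3|A1) + f(A2:A3|A4) + f(A1:A4). -/
/-!
Let `z` be a common information for `(A, B)`. As `z` is determined by `A` and by `B`, it is
determined by `W ∪ A` and by `W ∪ B`, so submodularity gives `g(z | W) ≤ g(A : B | W)` for
every `W`. Submodularity once more, between `W₁ ∪ {z}` and `W₄ ∪ {z}`, gives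
`g(z) ≤ g(z | W₁) + g(z | W₄) + g(W₁ : W₄)`, and `g(z) = g(A : B)` turns this into Ingleton.
-/

namespace Polymatroid

variable {β : Type*} [DecidableEq β] {g : Finset β → ℝ}

theorem add_le_of_subset_inter (hmono : ∀ X Y : Finset β, X ⊆ Y → g X ≤ g Y)
    (hsub : ∀ X Y : Finset β, g (X ∩ Y) + g (X ∪ Y) ≤ g X + g Y)
    {C X Y : Finset β} (hC : C ⊆ X ∩ Y) : g C + g (X ∪ Y) ≤ g X + g Y :=
  (add_le_add_left (hmono _ _ hC) _).trans (hsub X Y)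

theorem insert_le_of_insert_eq (hmono : ∀ X Y : Finset β, X ⊆ Y → g X ≤ g Y)
    (hsub : ∀ X Y : Finset β, g (X ∩ Y) + g (X ∪ Y) ≤ g X + g Y)
    {z : β} {A B : Finset β} (hA : g (insert z A) = g A) (hAB : A ⊆ B) :
    g (insert z B) ≤ g B := by
  have h := add_le_of_subset_inter hmono hsub
    (Finset.subset_inter (Finset.subset_insert z A) hAB)
  rw [Finset.insert_union, Finset.union_eq_right.mpr hAB] at h
  linarith

theorem insert_le_of_commonInfo (hmono : ∀ X Y : Finset β, X ⊆ Y → g X ≤ g Y)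
    (hsub : ∀ X Y : Finset β, g (X ∩ Y) + g (X ∪ Y) ≤ g X + g Y)
    {z : β} {A B : Finset β} (hA : g (insert z A) = g A) (hB : g (insert z B) = g B)
    (W : Finset β) :
    g (insert z W) ≤ g (W ∪ A) + g (W ∪ B) - g (W ∪ A ∪ B) := by
  have hWA := insert_le_of_insert_eq hmono hsub hA (Finset.subset_union_right (s₁ := W))
  have hWB := insert_le_of_insert_eq hmono hsub hB (Finset.subset_union_right (s₁ := W))
  have h := add_le_of_subset_inter hmono hsub (C := insert z W)
    (X := insert z (W ∪ A)) (Y := insert z (W ∪ B)) (by grind)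
  have hunion : insert z (W ∪ A) ∪ insert z (W ∪ B) = insert z (W ∪ A ∪ B) := by grind
  rw [hunion] at h
  have hdrop := hmono _ _ (Finset.subset_insert z (W ∪ A ∪ B))
  linarith

theorem ingleton_of_commonInfo (hmono : ∀ X Y : Finset β, X ⊆ Y → g X ≤ g Y)
    (hsub : ∀ X Y : Finset β, g (X ∩ Y) + g (X ∪ Y) ≤ g X + g Y)
    {z : β} {A B : Finset β} (hA : g (insert z A) = g A) (hB : g (insert z B) = g B)
    (hz : g {z} = g A + g B - g (A ∪ B)) (W₁ W₄ : Finset β) :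
    g A + g B - g (A ∪ B) ≤
      (g (W₁ ∪ A) + g (W₁ ∪ B) - g (W₁ ∪ A ∪ B) - g W₁) +
      (g (W₄ ∪ A) + g (W₄ ∪ B) - g (W₄ ∪ A ∪ B) - g W₄) +
      (g W₁ + g W₄ - g (W₁ ∪ W₄)) := by
  have h₁ := insert_le_of_commonInfo hmono hsub hA hB W₁
  have h₄ := insert_le_of_commonInfo hmono hsub hA hB W₄
  have h := add_le_of_subset_inter hmono hsub (C := {z})
    (X := insert z W₁) (Y := insert z W₄) (by simp)
  rw [← Finset.insert_union_distrib] at h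
  have hdrop := hmono _ _ (Finset.subset_insert z (W₁ ∪ W₄))
  linarith

end Polymatroid

theorem one_CI_compliant_ingleton_general
    {α : Type*} [DecidableEq α]
    (f : Finset α → ℝ)
    (hCI : ∀ A B : Finset α, ∃ f' : Finset (Option α) → ℝ,
      f' ∅ = 0 ∧
      (∀ X Y : Finset (Option α), X ⊆ Y → f' X ≤ f' Y) ∧
      (∀ X Y : Finset (Option α), f' (X ∩ Y) + f' (X ∪ Y) ≤ f' X + f' Y) ∧
      (∀ X : Finset α, f' (X.image some) = f X) ∧
      f' (insert none (A.image some)) = f' (A.image some) ∧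
      f' (insert none (B.image some)) = f' (B.image some) ∧
      f' {none} = f A + f B - f (A ∪ B)) :
    ∀ A1 A2 A3 A4 : Finset α,
      f A2 + f A3 - f (A2 ∪ A3) ≤
        (f (A1 ∪ A2) + f (A1 ∪ A3) - f (A1 ∪ A2 ∪ A3) - f A1) +
        (f (A4 ∪ A2) + f (A4 ∪ A3) - f (A4 ∪ A2 ∪ A3) - f A4) +
        (f A1 + f A4 - f (A1 ∪ A4)) := by
  intro A1 A2 A3 A4
  obtain ⟨f', -, hmono, hsub, hext, hA2, hA3, hnone⟩ := hCI A2 A3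
  rw [← hext A2, ← hext A3, ← hext (A2 ∪ A3), Finset.image_union] at hnone
  simpa only [← Finset.image_union, hext] using
    Polymatroid.ingleton_of_commonInfo hmono hsub hA2 hA3 hnone (A1.image some) (A4.image some)

/-- If a polymatroid `(Q,f)` is 1-CI-compliant (for every pair `(A,B)` of
subsets of `Q` there is a polymatroid extension by a new point `x_o` -- modelled
here via `Option α`, with `x_o = none` -- in which `x_o` is a common
information for `(A,B)`), then `f` satisfies the Ingleton inequality. -/
theorem one_CI_compliant_ingleton
    {α : Type*} [DecidableEq α] [Fintype α]
    (f : Finset α → ℝ)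
    (hempty : f ∅ = 0)
    (hmono : ∀ X Y : Finset α, X ⊆ Y → f X ≤ f Y)
    (hsubmod : ∀ X Y : Finset α, f (X ∩ Y) + f (X ∪ Y) ≤ f X + f Y)
    (hCI : ∀ A B : Finset α, ∃ f' : Finset (Option α) → ℝ,
      f' ∅ = 0 ∧
      (∀ X Y : Finset (Option α), X ⊆ Y → f' X ≤ f' Y) ∧
      (∀ X Y : Finset (Option α), f' (X ∩ Y) + f' (X ∪ Y) ≤ f' X + f' Y) ∧
      (∀ X : Finset α, f' (X.image some) = f X) ∧
      f' (insert none (A.image some)) = f' (A.image some) ∧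
      f' (insert none (B.image some)) = f' (B.image some) ∧
      f' {none} = f A + f B - f (A ∪ B)) :
    ∀ A1 A2 A3 A4 : Finset α,
      f A2 + f A3 - f (A2 ∪ A3) ≤
        (f (A1 ∪ A2) + f (A1 ∪ A3) - f (A1 ∪ A2 ∪ A3) - f A1) +
        (f (A4 ∪ A2) + f (A4 ∪ A3) - f (A4 ∪ A2 ∪ A3) - f A4) +
        (f A1 + f A4 - f (A1 ∪ A4)) :=
  one_CI_compliant_ingleton_general f hCI
end

section
/- Let Γ be the port at p_o of a matroid M = (Q,r), with Γ perfect. Then the dual access function Γ*, defined by Γ*(X) = 1 - Γ(P∖X) where P = Q∖{p_o}, equals the port of the dual matroid M* at p_o. -/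
open Finset

/-! Since `Q ∖ X = (P ∖ X) ∪ {p_o}` for `X ⊆ P`, expanding `r*` turns the dual port at `X` into
`r(p_o) + r(P) - r(Q) - Γ(P ∖ X)`, and the constant is `1` because `r(p_o) = 1` and `r(P) = r(Q)`. -/

namespace Matroid.Port

variable {α : Type*} [DecidableEq α] [Fintype α]

def port (r : Finset α → ℤ) (a : α) (X : Finset α) : ℤ :=
  r X + r {a} - r (X ∪ {a})

def dualRank (r : Finset α → ℤ) (X : Finset α) : ℤ :=
  X.card - r univ + r (univ \ X)

lemma univ_sdiff_union_singleton (X : Finset α) (a : α) :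
    univ \ (X ∪ {a}) = (univ \ {a}) \ X := by
  ext; simp

lemma univ_sdiff_eq_sdiff_union_singleton {X : Finset α} {a : α} (ha : a ∉ X) :
    univ \ X = (univ \ {a}) \ X ∪ {a} := by
  ext b
  by_cases hb : b = a <;> simp [hb, ha]

lemma port_dualRank (r : Finset α → ℤ) {a : α} {X : Finset α} (ha : a ∉ X) :
    port (dualRank r) a X =
      r {a} + r (univ \ {a}) - r univ - port r a ((univ \ {a}) \ X) := by
  have hcard : ((X ∪ {a}).card : ℤ) = X.card + 1 := by
    rw [card_union_of_disjoint (disjoint_singleton_right.mpr ha), card_singleton, Nat.cast_add,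
      Nat.cast_one]
  simp only [port, dualRank, hcard, card_singleton, Nat.cast_one, univ_sdiff_union_singleton,
    ← univ_sdiff_eq_sdiff_union_singleton ha]
  ring

end Matroid.Port

open Matroid.Port in
theorem dual_port_eq_port_of_dual_general
    {α : Type*} [DecidableEq α] [Fintype α]
    (r : Finset α → ℤ)
    (po : α)
    (hpo : r {po} = 1)
    (hall : r (univ \ {po}) = r univ)
    (Γ : Finset α → ℤ)
    (hΓ : ∀ X : Finset α, Γ X = r X + r {po} - r (X ∪ {po}))
    (rd : Finset α → ℤ)
    (hrd : ∀ X : Finset α, rd X = (X.card : ℤ) - r univ + r (univ \ X)) :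
    ∀ X : Finset α, X ⊆ univ \ {po} →
      1 - Γ ((univ \ {po}) \ X) = rd X + rd {po} - rd (X ∪ {po}) := by
  obtain rfl : Γ = port r po := funext hΓ
  obtain rfl : rd = dualRank r := funext hrd
  intro X hX
  have hpoX : po ∉ X := fun h => by simpa using hX h
  rw [← port, port_dualRank r hpoX, hpo, hall]
  ring

/-- If `Γ` is the (perfect) port at `p_o` of a matroid `M = (Q,r)`, then the
dual access function `Γ*(X) = 1 - Γ(P∖X)` (where `P = Q∖{p_o}`) equals the port
of the dual matroid `M*` (with rank `r*(X) = |X| - r(Q) + r(Q∖X)`) at `p_o`. -/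
theorem dual_port_eq_port_of_dual
    {α : Type*} [DecidableEq α] [Fintype α]
    (r : Finset α → ℤ)
    (hempty : r ∅ = 0)
    (hmono : ∀ X Y : Finset α, X ⊆ Y → r X ≤ r Y)
    (hsubmod : ∀ X Y : Finset α, r (X ∩ Y) + r (X ∪ Y) ≤ r X + r Y)
    (hcard : ∀ X : Finset α, r X ≤ X.card)
    (po : α)
    (hpo : r {po} = 1)
    (hall : r (univ \ {po}) = r univ)
    (Γ : Finset α → ℤ)
    (hΓ : ∀ X : Finset α, Γ X = r X + r {po} - r (X ∪ {po}))
    (hperfect : ∀ X : Finset α, X ⊆ univ \ {po} → Γ X = 0 ∨ Γ X = 1)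
    (rd : Finset α → ℤ)
    (hrd : ∀ X : Finset α, rd X = (X.card : ℤ) - r univ + r (univ \ X)) :
    ∀ X : Finset α, X ⊆ univ \ {po} →
      1 - Γ ((univ \ {po}) \ X) = rd X + rd {po} - rd (X ∪ {po}) :=
  dual_port_eq_port_of_dual_general r po hpo hall Γ hΓ rd hrd
end

section
/- Every rank-3 flat structure from a matroid extendable to a modular matroid is CI-compliant; specifically, if a matroid (Q,r) has a modular extension (Q',r), then for every pair (A,B) of subsets of Q the element (or flat) computed as the intersection of the closures of A and B in the modular extension is a common information for (A,B): r(X_o|A) = r(X_o|B) = 0 and r(X_o) = r(A:B), where X_o is the intersection of the flats spanned by A and B. -/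
/-!
Closures in a monotone submodular rank function do not raise rank, are monotone, and are flats.
Hence `cl A` and `cl B` are flats with `r (cl A ∪ cl B) = r (A ∪ B)`, so modularity of this pair
of flats computes `r (cl A ∩ cl B)`, while `A ∪ (cl A ∩ cl B) ⊆ cl A` has the rank of `A`.
-/

open Finset

namespace RankFunction

variable {β : Type*} [DecidableEq β]

theorem rank_union_eq_of_forall_rank_insert_eq {r : Finset β → ℤ} (hmono : Monotone r)
    (hsubmod : ∀ X Y : Finset β, r (X ∩ Y) + r (X ∪ Y) ≤ r X + r Y) (X : Finset β) :
    ∀ Y : Finset β, (∀ y ∈ Y, r (insert y X) = r X) → r (X ∪ Y) = r X := by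
  intro Y
  induction Y using Finset.induction_on with
  | empty => simp
  | @insert y Y _ ih =>
    intro h
    have hY : r (X ∪ Y) = r X := ih fun z hz => h z (mem_insert_of_mem hz)
    have hy : r (insert y X) = r X := h y (mem_insert_self y Y)
    have hinter : r X ≤ r ((X ∪ Y) ∩ insert y X) :=
      hmono (subset_inter subset_union_left (subset_insert y X))
    have hunion : (X ∪ Y) ∪ insert y X = X ∪ insert y Y := by
      ext z; simp only [mem_union, mem_insert]; tauto
    have := hsubmod (X ∪ Y) (insert y X)
    rw [hunion] at this
    exact le_antisymm (by linarith) (hmono subset_union_left)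

def closure [Fintype β] (r : Finset β → ℤ) (X : Finset β) : Finset β :=
  univ.filter fun x => r (insert x X) = r X

section Closure

variable [Fintype β] {r : Finset β → ℤ} {X Y : Finset β} {x : β}

theorem mem_closure : x ∈ closure r X ↔ r (insert x X) = r X := by
  simp [closure]

theorem subset_closure : X ⊆ closure r X := fun x hx =>
  mem_closure.2 (by rw [insert_eq_of_mem hx])

theorem closure_mono (hmono : Monotone r)
    (hsubmod : ∀ X Y : Finset β, r (X ∩ Y) + r (X ∪ Y) ≤ r X + r Y) (hXY : X ⊆ Y) :
    closure r X ⊆ closure r Y := by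
  intro x hx
  rw [mem_closure] at hx ⊢
  have hinter : r X ≤ r (insert x X ∩ Y) :=
    hmono (subset_inter (subset_insert x X) hXY)
  have hunion : insert x X ∪ Y = insert x Y := by
    rw [insert_union, union_eq_right.2 hXY]
  have := hsubmod (insert x X) Y
  rw [hunion] at this
  exact le_antisymm (by linarith) (hmono (subset_insert x Y))

theorem rank_closure (hmono : Monotone r)
    (hsubmod : ∀ X Y : Finset β, r (X ∩ Y) + r (X ∪ Y) ≤ r X + r Y) (X : Finset β) :
    r (closure r X) = r X := by
  have := rank_union_eq_of_forall_rank_insert_eq hmono hsubmod X (closure r X)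
    fun _ => mem_closure.1
  rwa [union_eq_right.2 subset_closure] at this

theorem rank_eq_of_subset_closure (hmono : Monotone r)
    (hsubmod : ∀ X Y : Finset β, r (X ∩ Y) + r (X ∪ Y) ≤ r X + r Y)
    (hXY : X ⊆ Y) (hY : Y ⊆ closure r X) : r Y = r X :=
  le_antisymm (rank_closure hmono hsubmod X ▸ hmono hY) (hmono hXY)

theorem rank_lt_rank_insert_closure (hmono : Monotone r)
    (hsubmod : ∀ X Y : Finset β, r (X ∩ Y) + r (X ∪ Y) ≤ r X + r Y)
    (X : Finset β) : ∀ x ∉ closure r X, r (closure r X) < r (insert x (closure r X)) := by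
  intro x hx
  have hlt : r X < r (insert x X) :=
    lt_of_le_of_ne (hmono (subset_insert x X)) fun h => hx (mem_closure.2 h.symm)
  rw [rank_closure hmono hsubmod]
  exact hlt.trans_le (hmono (insert_subset_insert x subset_closure))

theorem rank_closure_union_closure (hmono : Monotone r)
    (hsubmod : ∀ X Y : Finset β, r (X ∩ Y) + r (X ∪ Y) ≤ r X + r Y) (X Y : Finset β) :
    r (closure r X ∪ closure r Y) = r (X ∪ Y) := by
  apply rank_eq_of_subset_closure hmono hsubmod (union_subset_union subset_closure subset_closure)
  exact union_subset (closure_mono hmono hsubmod subset_union_left)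
    (closure_mono hmono hsubmod subset_union_right)

end Closure

end RankFunction

open RankFunction in
theorem modular_extension_common_information_general
    {β : Type*} [DecidableEq β] [Fintype β]
    (r : Finset β → ℤ)
    (hmono : ∀ X Y : Finset β, X ⊆ Y → r X ≤ r Y)
    (hsubmod : ∀ X Y : Finset β, r (X ∩ Y) + r (X ∪ Y) ≤ r X + r Y)
    -- the extension is modular: every pair of flats is a modular pair
    (hmodular : ∀ A B : Finset β,
      (∀ x ∉ A, r A < r (insert x A)) → (∀ x ∉ B, r B < r (insert x B)) →
      r A + r B = r (A ∪ B) + r (A ∩ B))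
    (A B : Finset β)
    (cl : Finset β → Finset β)
    (hcl : ∀ X : Finset β, cl X = univ.filter (fun x => r (insert x X) = r X)) :
    r (A ∪ (cl A ∩ cl B)) - r A = 0 ∧
    r (B ∪ (cl A ∩ cl B)) - r B = 0 ∧
    r (cl A ∩ cl B) = r A + r B - r (A ∪ B) := by
  obtain rfl : cl = closure r := funext hcl
  have hr : Monotone r := fun X Y => hmono X Y
  have hA : r (A ∪ (closure r A ∩ closure r B)) = r A :=
    rank_eq_of_subset_closure hr hsubmod subset_union_left
      (union_subset subset_closure inter_subset_left)
  have hB : r (B ∪ (closure r A ∩ closure r B)) = r B :=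
    rank_eq_of_subset_closure hr hsubmod subset_union_left
      (union_subset subset_closure inter_subset_right)
  have hmod := hmodular (closure r A) (closure r B)
    (rank_lt_rank_insert_closure hr hsubmod A) (rank_lt_rank_insert_closure hr hsubmod B)
  rw [rank_closure_union_closure hr hsubmod, rank_closure hr hsubmod,
    rank_closure hr hsubmod] at hmod
  exact ⟨by omega, by omega, by omega⟩

/-- If a matroid `(Q,r)` has a modular extension `(Q',r)` (here the extension is
the matroid on the whole ground type, and `Q` is a subset of it), then for
every pair `(A,B)` of subsets of `Q`, the intersection `X_o` of the flats
spanned by `A` and `B` in the modular extension is a common information for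
`(A,B)`: `r(X_o|A) = r(X_o|B) = 0` and `r(X_o) = r(A:B)`. -/
theorem modular_extension_common_information
    {β : Type*} [DecidableEq β] [Fintype β]
    (Q : Finset β) (r : Finset β → ℤ)
    (hempty : r ∅ = 0)
    (hmono : ∀ X Y : Finset β, X ⊆ Y → r X ≤ r Y)
    (hsubmod : ∀ X Y : Finset β, r (X ∩ Y) + r (X ∪ Y) ≤ r X + r Y)
    (hcard : ∀ X : Finset β, r X ≤ X.card)
    -- the extension is modular: every pair of flats is a modular pair
    (hmodular : ∀ A B : Finset β,
      (∀ x ∉ A, r A < r (insert x A)) → (∀ x ∉ B, r B < r (insert x B)) →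
      r A + r B = r (A ∪ B) + r (A ∩ B))
    (A B : Finset β) (hA : A ⊆ Q) (hB : B ⊆ Q)
    (cl : Finset β → Finset β)
    (hcl : ∀ X : Finset β, cl X = univ.filter (fun x => r (insert x X) = r X)) :
    r (A ∪ (cl A ∩ cl B)) - r A = 0 ∧
    r (B ∪ (cl A ∩ cl B)) - r B = 0 ∧
    r (cl A ∩ cl B) = r A + r B - r (A ∪ B) :=
  modular_extension_common_information_general r hmono hsubmod hmodular A B cl hcl
end

section
/- In a polymatroid (Q,f) with port Γ at p_o, if Γ is perfect and X is a minimal qualified set of Γ with x ∈ X, then f(x) ≥ f(p_o). -/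
/-!
Qualification of `X` means adding `p_o` to `X` costs nothing, while removing `x` makes `p_o`
cost its full `f(p_o)`. Since `X ∖ {x} ∪ {p_o} ⊆ X ∪ {p_o}`, this gives
`f(X ∖ {x}) + f(p_o) ≤ f(X) ≤ f(X ∖ {x}) + f(x)`, the last step by subadditivity of `f`.
-/

open Finset

namespace Polymatroid

variable {α : Type*} [DecidableEq α]

noncomputable def port (f : Finset α → ℝ) (po : α) (X : Finset α) : ℝ :=
  (f X + f {po} - f (X ∪ {po})) / f {po}

variable {f : Finset α → ℝ} {po : α}

theorem port_eq_one_iff (hpo : f {po} ≠ 0) {X : Finset α} :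
    port f po X = 1 ↔ f (X ∪ {po}) = f X := by
  rw [port, div_eq_one_iff_eq hpo]
  constructor <;> intro h <;> linarith

theorem port_eq_zero_iff (hpo : f {po} ≠ 0) {X : Finset α} :
    port f po X = 0 ↔ f (X ∪ {po}) = f X + f {po} := by
  rw [port, div_eq_zero_iff, or_iff_left hpo]
  constructor <;> intro h <;> linarith

theorem union_le_add_of_submodular (hempty : f ∅ = 0) (hmono : Monotone f)
    (hsubmod : ∀ X Y : Finset α, f (X ∩ Y) + f (X ∪ Y) ≤ f X + f Y) (X Y : Finset α) :
    f (X ∪ Y) ≤ f X + f Y := by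
  have hnonneg : 0 ≤ f (X ∩ Y) := hempty ▸ hmono (empty_subset _)
  linarith [hsubmod X Y]

theorem le_of_port_eq_one_of_port_sdiff_eq_zero (hempty : f ∅ = 0) (hmono : Monotone f)
    (hsubmod : ∀ X Y : Finset α, f (X ∩ Y) + f (X ∪ Y) ≤ f X + f Y) (hpo : f {po} ≠ 0)
    {X : Finset α} {x : α} (hx : x ∈ X) (hqual : port f po X = 1)
    (hunqual : port f po (X \ {x}) = 0) :
    f {po} ≤ f {x} := by
  rw [port_eq_one_iff hpo] at hqual
  rw [port_eq_zero_iff hpo] at hunqual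
  have hsplit : f X ≤ f (X \ {x}) + f {x} := by
    simpa [sdiff_union_of_subset (singleton_subset_iff.mpr hx)] using
      union_le_add_of_submodular hempty hmono hsubmod (X \ {x}) {x}
  have hgrow : f (X \ {x} ∪ {po}) ≤ f (X ∪ {po}) :=
    hmono (union_subset_union_left sdiff_subset)
  linarith

end Polymatroid

theorem minimal_qualified_share_bound_general
    {α : Type*} [DecidableEq α]
    (f : Finset α → ℝ)
    (hempty : f ∅ = 0)
    (hmono : ∀ X Y : Finset α, X ⊆ Y → f X ≤ f Y)
    (hsubmod : ∀ X Y : Finset α, f (X ∩ Y) + f (X ∪ Y) ≤ f X + f Y)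
    (po : α) (hpos : 0 < f {po})
    (Γ : Finset α → ℝ)
    (hΓ : ∀ X : Finset α, Γ X = (f X + f {po} - f (X ∪ {po})) / f {po})
    (X : Finset α)
    (hqual : Γ X = 1)
    (hminimal : ∀ y ∈ X, Γ (X \ {y}) = 0)
    (x : α) (hx : x ∈ X) :
    f {po} ≤ f {x} := by
  obtain rfl : Γ = Polymatroid.port f po := funext hΓ
  exact Polymatroid.le_of_port_eq_one_of_port_sdiff_eq_zero hempty (fun _ _ ↦ hmono _ _)
    hsubmod hpos.ne' hx hqual (hminimal x hx)

/-- In a polymatroid `(Q,f)` with (perfect) port `Γ` at `p_o`, if `X` is a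
minimal qualified set of `Γ` and `x ∈ X`, then `f(x) ≥ f(p_o)`. -/
theorem minimal_qualified_share_bound
    {α : Type*} [DecidableEq α] [Fintype α]
    (f : Finset α → ℝ)
    (hempty : f ∅ = 0)
    (hmono : ∀ X Y : Finset α, X ⊆ Y → f X ≤ f Y)
    (hsubmod : ∀ X Y : Finset α, f (X ∩ Y) + f (X ∪ Y) ≤ f X + f Y)
    (po : α) (hpos : 0 < f {po})
    (Γ : Finset α → ℝ)
    (hΓ : ∀ X : Finset α, Γ X = (f X + f {po} - f (X ∪ {po})) / f {po})
    (hperfect : ∀ X : Finset α, X ⊆ univ \ {po} → Γ X = 0 ∨ Γ X = 1)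
    (X : Finset α) (hX : X ⊆ univ \ {po})
    (hqual : Γ X = 1)
    (hminimal : ∀ y ∈ X, Γ (X \ {y}) = 0)
    (x : α) (hx : x ∈ X) :
    f {po} ≤ f {x} :=
  minimal_qualified_share_bound_general f hempty hmono hsubmod po hpos Γ hΓ X hqual hminimal x hx
end
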